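/- For the Lag system R_p with rules blank·blank → blank, blank·p → p, p·blank → blank (acting on control coordinates of pairs, preserving data coordinates), and any starting string (s₁,blank)(s₂,blank)...(s_{n-1},p)(sₙ,blank) with n ≥ 3: after (n−1)² iterations the memory string is (s₂,blank)...(s_{n-1},blank)(sₙ,p)(s₁,blank), and after n(n−1) iterations the memory string equals the initial string; hence the system is periodic with period n(n−1). -/

import Mathlib

namespace Stmt4

/-- Control symbols: blank or the pulse token `p`. -/
inductive Ctl | blank | p
deriving DecidableEq

/-- The rule set `R_p` on control coordinates. -/
def rc : Ctl → Ctl → Option Ctl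
  | .blank, .blank => some .blank
  | .blank, .p => some .p
  | .p, .blank => some .blank
  | _, _ => none

/-- One Lag iteration with context length 2. -/
def step {α : Type*} (r : Ctl → Ctl → Option Ctl) :
    List (α × Ctl) → Option (List (α × Ctl))
  | (x, a) :: (y, b) :: rest => (r a b).map fun c => (y, b) :: rest ++ [(x, c)]
  | _ => none

/-- `k` iterations of the Lag system. -/
def iterL {α : Type*} (r : Ctl → Ctl → Option Ctl) :
    ℕ → List (α × Ctl) → Option (List (α × Ctl))
  | 0, s => some s
  | k + 1, s => (step r s).bind (iterL r k)

end Stmt4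

/-!
Call a string *pulsed* when its only `p` sits on the second-to-last pair. From a pulsed string
of length `m ≥ 3`, `m - 3` steps cycle blank pairs to the back (blank·blank → blank) until the
pulse is second; the next two steps (blank·p → p, p·blank → blank) pass the pulse one symbol to
the left. After these `m - 1` steps the string is pulsed again, its data rotated right by one.
So `k (n - 1)` steps rotate the data right by `k`, and `(n - 1)² ≡ 1`, `n (n - 1) ≡ 0 (mod n)`.
-/

namespace Stmt4

variable {α : Type*}

theorem iterL_add (r : Ctl → Ctl → Option Ctl) (a b : ℕ) (s : List (α × Ctl)) :
    iterL r (a + b) s = (iterL r a s).bind (iterL r b) := by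
  induction a generalizing s with
  | zero => simp [iterL]
  | succ a ih =>
    rw [Nat.add_right_comm, iterL, iterL, Option.bind_assoc]
    simp only [ih]

def blanks (L : List α) : List (α × Ctl) := L.map (·, .blank)

theorem iterL_blanks_append {r : Ctl → Ctl → Option Ctl} (hr : r .blank .blank = some .blank)
    (L : List α) (y : α) (T : List (α × Ctl)) :
    iterL r L.length (blanks L ++ (y, .blank) :: T) = some ((y, .blank) :: T ++ blanks L) := by
  induction L generalizing y T with
  | nil => simp [iterL, blanks]
  | cons x L ih =>
    cases L with
    | nil => simp [iterL, step, blanks, hr]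
    | cons w L =>
      have := ih w (T ++ [(x, .blank)])
      simp_all [iterL, step, blanks]

def pulsed (F : List α) : List (α × Ctl) :=
  F.mapIdx fun i a => (a, if i = F.length - 2 then .p else .blank)

theorem pulsed_append_pair (L : List α) (c d : α) :
    pulsed (L ++ [c, d]) = blanks L ++ [(c, .p), (d, .blank)] := by
  apply List.ext_getElem
  · simp [pulsed, blanks]
  · intro i h1 h2
    have hi : i < L.length + 2 := by simpa [blanks] using h2
    simp only [pulsed, blanks, List.getElem_mapIdx, List.getElem_map, List.getElem_append]
    split_ifs <;> grind

theorem iterL_pulsed_cycle (L : List α) (y c d : α) :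
    iterL rc (L.length + 2) (pulsed (L ++ [y, c, d])) = some (pulsed (d :: L ++ [y, c])) := by
  have hsplit : pulsed (L ++ [y, c, d]) = blanks L ++ (y, .blank) :: [(c, .p), (d, .blank)] := by
    rw [show L ++ [y, c, d] = L ++ [y] ++ [c, d] by simp, pulsed_append_pair]
    simp [blanks]
  rw [hsplit, pulsed_append_pair, iterL_add, iterL_blanks_append rfl]
  simp [iterL, step, rc, blanks]

theorem iterL_pulsed_rotate (F : List α) (hF : 3 ≤ F.length) :
    iterL rc (F.length - 1) (pulsed F) = some (pulsed (F.rotate (F.length - 1))) := by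
  obtain ⟨L, y, c, d, rfl⟩ : ∃ L y c d, F = L ++ [y, c, d] := by
    have h3 : (F.drop (F.length - 3)).length = 3 := by simp only [List.length_drop]; omega
    obtain ⟨y, c, d, h⟩ := List.length_eq_three.mp h3
    exact ⟨F.take (F.length - 3), y, c, d, by rw [← h, List.take_append_drop]⟩
  have hrot : (L ++ [y, c, d]).rotate (L.length + 2) = d :: L ++ [y, c] := by
    simpa using List.rotate_append_length_eq (L ++ [y, c]) [d]
  simpa [hrot] using iterL_pulsed_cycle L y c d

theorem iterL_pulsed_rotate_mul (k : ℕ) (F : List α) (hF : 3 ≤ F.length) :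
    iterL rc (k * (F.length - 1)) (pulsed F) =
      some (pulsed (F.rotate (k * (F.length - 1)))) := by
  induction k generalizing F with
  | zero => simp [iterL]
  | succ k ih =>
    have hlen := F.length_rotate (F.length - 1)
    have ih' := ih _ (hlen ▸ hF)
    rw [hlen] at ih'
    rw [Nat.succ_mul, Nat.add_comm, iterL_add, iterL_pulsed_rotate F hF, Option.bind_some, ih',
      List.rotate_rotate]

theorem ofFn_eq_pulsed {n : ℕ} (s : Fin n → α) :
    List.ofFn (fun i : Fin n => (s i, if i.val = n - 2 then Ctl.p else Ctl.blank)) =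
      pulsed (List.ofFn s) := by
  apply List.ext_getElem <;> simp [pulsed]

theorem ofFn_rotate_one {n : ℕ} (hn : 0 < n) (s : Fin n → α) :
    (List.ofFn s).rotate 1 = List.ofFn fun i : Fin n => s ⟨(i.val + 1) % n, Nat.mod_lt _ hn⟩ := by
  apply List.ext_getElem <;> simp [List.getElem_rotate]

theorem sub_one_mul_sub_one_mod_self {n : ℕ} (hn : 2 ≤ n) : (n - 1) * (n - 1) % n = 1 := by
  obtain ⟨m, rfl⟩ : ∃ m, n = m + 2 := ⟨n - 2, by omega⟩
  rw [show (m + 2 - 1) * (m + 2 - 1) = 1 + m * (m + 2) by simp; ring, Nat.add_mul_mod_self_right]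
  exact Nat.mod_eq_of_lt (by omega)

end Stmt4

open Stmt4 in
/-- Starting from `(s₁,blank)...(s_{n-2},blank)(s_{n-1},p)(sₙ,blank)` with `n ≥ 3`:
after `(n−1)²` iterations the string is `(s₂,blank)...(s_{n-1},blank)(sₙ,p)(s₁,blank)`,
and after `n(n−1)` iterations the string equals the initial string
(hence the system is periodic with period `n(n−1)`). -/
theorem stmt4 {α : Type*} (n : ℕ) (hn : 3 ≤ n) (s : Fin n → α) :
    iterL rc ((n - 1) ^ 2)
      (List.ofFn fun i : Fin n => (s i, if i.val = n - 2 then Ctl.p else Ctl.blank)) =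
      some (List.ofFn fun i : Fin n =>
        (s ⟨(i.val + 1) % n, Nat.mod_lt _ (by omega)⟩,
          if i.val = n - 2 then Ctl.p else Ctl.blank)) ∧
    iterL rc (n * (n - 1))
      (List.ofFn fun i : Fin n => (s i, if i.val = n - 2 then Ctl.p else Ctl.blank)) =
      some (List.ofFn fun i : Fin n =>
        (s i, if i.val = n - 2 then Ctl.p else Ctl.blank)) := by
  have hcycles := fun k => iterL_pulsed_rotate_mul k (List.ofFn s) (by simpa using hn)
  simp only [List.length_ofFn] at hcycles
  simp only [ofFn_eq_pulsed]
  constructor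
  · rw [sq, hcycles, ← List.rotate_mod, List.length_ofFn, sub_one_mul_sub_one_mod_self (by omega),
      ofFn_rotate_one (by omega)]
  · rw [hcycles, ← List.rotate_mod, List.length_ofFn, Nat.mul_mod_right, List.rotate_zero]
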